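/- Right multiplication by x on normal forms in M is given by: for 0 ≤ k ≤ n, (xⁿyᵏ)·x = x^{n+1} if k = 0, and (xⁿyᵏ)·x = xⁿy^{k−1} if k ≥ 1; for 0 ≤ n < k and 0 ≤ j ≤ k, (xⁿyᵏxʲ)·x = xⁿyᵏx^{j+1} if j < k, and (xⁿyᵏxᵏ)·x = x^{n+1}y^{k+1}x^{k+1}. -/
import Mathlib


/-- The formal inverse of a word over `{x, y}` (with `x = true`, `y = false`):
reverse the word and interchange the two letters. -/
def winv (w : FreeMonoid Bool) : FreeMonoid Bool :=
  FreeMonoid.ofList ((FreeMonoid.toList w).reverse.map Bool.not)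

/-- The defining relations of the free monogenic inverse monoid. -/
inductive FIMRel1 : FreeMonoid Bool → FreeMonoid Bool → Prop
  | idem (w : FreeMonoid Bool) : FIMRel1 (w * winv w * w) w
  | comm (w z : FreeMonoid Bool) :
      FIMRel1 (w * winv w * (z * winv z)) (z * winv z * (w * winv w))

/-- The free monogenic inverse monoid. -/
abbrev FIM1 := (conGen FIMRel1).Quotient

/-- The generator `x` of the free monogenic inverse monoid. -/
def mx : FIM1 := (conGen FIMRel1).mk' (FreeMonoid.of true)

/-- The (generalized) inverse `y` of the generator. -/
def my : FIM1 := (conGen FIMRel1).mk' (FreeMonoid.of false)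

lemma winv_mul (u v : FreeMonoid Bool) : winv (u * v) = winv v * winv u := by
  simp [winv, FreeMonoid.toList_mul]

lemma winv_of (b : Bool) : winv (FreeMonoid.of b) = FreeMonoid.of (!b) := by
  rfl

lemma winv_pow_of (b : Bool) (n : ℕ) :
    winv ((FreeMonoid.of b) ^ n) = (FreeMonoid.of (!b)) ^ n := by
  induction n with
  | zero => rfl
  | succ n ih => rw [pow_succ, winv_mul, ih, winv_of, ← pow_succ']

lemma mk_idem (w : FreeMonoid Bool) :
    (conGen FIMRel1).mk' (w * winv w * w) = (conGen FIMRel1).mk' w :=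
  (Con.eq _).2 (ConGen.Rel.of _ _ (FIMRel1.idem w))

lemma mk_comm (w z : FreeMonoid Bool) :
    (conGen FIMRel1).mk' (w * winv w * (z * winv z))
      = (conGen FIMRel1).mk' (z * winv z * (w * winv w)) :=
  (Con.eq _).2 (ConGen.Rel.of _ _ (FIMRel1.comm w z))

lemma mxyx : mx * my * mx = mx := by
  have := mk_idem (FreeMonoid.of true)
  rw [winv_of] at this
  simpa [mx, my, map_mul] using this

lemma comm_pow (m : ℕ) : (mx ^ m * my ^ m) * (my * mx) = (my * mx) * (mx ^ m * my ^ m) := by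
  have := mk_comm ((FreeMonoid.of true) ^ m) (FreeMonoid.of false)
  rw [winv_pow_of, winv_of] at this
  simpa [mx, my, map_mul, map_pow, mul_assoc] using this

lemma comm_pow' (k : ℕ) : (mx * my) * (my ^ k * mx ^ k) = (my ^ k * mx ^ k) * (mx * my) := by
  have := mk_comm (FreeMonoid.of true) ((FreeMonoid.of false) ^ k)
  rw [winv_pow_of, winv_of] at this
  simpa [mx, my, map_mul, map_pow, mul_assoc] using this

/-- Right multiplication by `x` on the normal forms of `M`. -/
theorem right_mul_x :
    (∀ n : ℕ, mx ^ n * my ^ 0 * mx = mx ^ (n + 1)) ∧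
    (∀ n k : ℕ, 1 ≤ k → k ≤ n → mx ^ n * my ^ k * mx = mx ^ n * my ^ (k - 1)) ∧
    (∀ n k j : ℕ, n < k → j < k →
      mx ^ n * my ^ k * mx ^ j * mx = mx ^ n * my ^ k * mx ^ (j + 1)) ∧
    (∀ n k : ℕ, n < k →
      mx ^ n * my ^ k * mx ^ k * mx = mx ^ (n + 1) * my ^ (k + 1) * mx ^ (k + 1)) := by
  refine ⟨fun n => by simp [pow_succ], ?_, fun n k j _ _ => by rw [pow_succ, mul_assoc], ?_⟩
  · rintro n k hk hkn
    obtain ⟨m, rfl⟩ : ∃ m, k = m + 1 := ⟨k - 1, (Nat.succ_pred_eq_of_pos hk).symm⟩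
    obtain ⟨a, ha, rfl⟩ : ∃ a, 1 ≤ a ∧ n = a + m :=
      ⟨n - m, by omega, by omega⟩
    obtain ⟨b, rfl⟩ : ∃ b, a = b + 1 := ⟨a - 1, (Nat.succ_pred_eq_of_pos ha).symm⟩
    have key := comm_pow m
    calc mx ^ (b + 1 + m) * my ^ (m + 1) * mx
        = mx ^ b * mx * ((mx ^ m * my ^ m) * (my * mx)) := by
          simp [pow_add, pow_succ, mul_assoc]
      _ = mx ^ b * mx * ((my * mx) * (mx ^ m * my ^ m)) := by rw [key]
      _ = mx ^ b * (mx * my * mx) * (mx ^ m * my ^ m) := by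
          simp [mul_assoc]
      _ = mx ^ (b + 1 + m) * my ^ (m + 1 - 1) := by
          rw [mxyx]; simp [pow_add, pow_succ, mul_assoc]
  · intro n k _
    have key : mx * (my ^ (k + 1) * mx ^ (k + 1)) = my ^ k * mx ^ (k + 1) := by
      calc mx * (my ^ (k + 1) * mx ^ (k + 1))
          = (mx * my) * (my ^ k * mx ^ k) * mx := by
            rw [pow_succ', pow_succ]; simp [mul_assoc]
        _ = (my ^ k * mx ^ k) * (mx * my) * mx := by rw [comm_pow']
        _ = my ^ k * mx ^ k * (mx * my * mx) := by simp [mul_assoc]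
        _ = my ^ k * mx ^ (k + 1) := by rw [mxyx, pow_succ, mul_assoc]
    calc mx ^ n * my ^ k * mx ^ k * mx
        = mx ^ n * (my ^ k * mx ^ (k + 1)) := by rw [pow_succ]; simp [mul_assoc]
      _ = mx ^ n * (mx * (my ^ (k + 1) * mx ^ (k + 1))) := by rw [key]
      _ = mx ^ (n + 1) * my ^ (k + 1) * mx ^ (k + 1) := by simp [pow_succ, mul_assoc]
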